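/- arXiv:1812.11832 — 3 statements merged into one kernel-verified Lean document; each statement's English description precedes it below -/
import Mathlib

section
/- Let F1, …, Fn be GENEOs from (Φ, G) to (Ψ, H) associated with T, and let a1, …, an be real numbers with Σ|a_i| ≤ 1. If the operator F_Σ(φ) := Σ a_i F_i(φ) maps Φ into Ψ, then F_Σ is a GENEO from (Φ, G) to (Ψ, H) associated with T. In particular, if Ψ is convex then the set of GENEOs from (Φ, G) to (Ψ, H) associated with T is convex. -/
/-- `F` is a group equivariant non-expansive operator from `(Φ,G)` to `(Ψ,H)`
associated with the homomorphism `T : G → H`. -/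
def IsGENEO {X Y : Type*} (Φ : Set (X → ℝ)) (Ψ : Set (Y → ℝ))
    (G : Subgroup (Equiv.Perm X)) (H : Subgroup (Equiv.Perm Y)) (T : G →* H)
    (F : (X → ℝ) → (Y → ℝ)) : Prop :=
  (∀ φ ∈ Φ, F φ ∈ Ψ) ∧
  (∀ φ ∈ Φ, ∀ g : G, F (fun x => φ (g.1 x)) = fun y => F φ ((T g).1 y)) ∧
  (∀ φ1 ∈ Φ, ∀ φ2 ∈ Φ, (⨆ y, |F φ1 y - F φ2 y|) ≤ ⨆ x, |φ1 x - φ2 x|)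

/-! A weighted sum `Σ aᵢ Fᵢ` with `Σ |aᵢ| ≤ 1` is equivariant term by term, and at every point
`|Σ aᵢ (Fᵢ φ₁ - Fᵢ φ₂)| ≤ Σ |aᵢ| ‖φ₁ - φ₂‖∞ ≤ ‖φ₁ - φ₂‖∞`. The boundedness of the functions in `Ψ`
is what lets the pointwise value `|Fᵢ φ₁ y - Fᵢ φ₂ y|` be compared with its supremum. -/

theorem abs_sum_mul_le_of_abs_le {ι : Type*} [Fintype ι] {a u : ι → ℝ} {S : ℝ}
    (ha : ∑ i, |a i| ≤ 1) (hu : ∀ i, |u i| ≤ S) (hS : 0 ≤ S) :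
    |∑ i, a i * u i| ≤ S :=
  calc |∑ i, a i * u i|
      ≤ ∑ i, |a i| * |u i| := by
        simpa only [abs_mul] using Finset.abs_sum_le_sum_abs (fun i => a i * u i) Finset.univ
    _ ≤ ∑ i, |a i| * S :=
        Finset.sum_le_sum fun i _ => mul_le_mul_of_nonneg_left (hu i) (abs_nonneg _)
    _ = (∑ i, |a i|) * S := (Finset.sum_mul ..).symm
    _ ≤ S := mul_le_of_le_one_left hS ha

theorem bddAbove_range_abs_sub {Y : Type*} {f g : Y → ℝ}
    (hf : ∃ C : ℝ, ∀ y, |f y| ≤ C) (hg : ∃ C : ℝ, ∀ y, |g y| ≤ C) :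
    BddAbove (Set.range fun y => |f y - g y|) := by
  obtain ⟨C₁, hC₁⟩ := hf
  obtain ⟨C₂, hC₂⟩ := hg
  refine ⟨C₁ + C₂, ?_⟩
  rintro _ ⟨y, rfl⟩
  exact (abs_sub _ _).trans (add_le_add (hC₁ y) (hC₂ y))

section IsGENEO

variable {X Y : Type*} {Φ : Set (X → ℝ)} {Ψ : Set (Y → ℝ)}
  {G : Subgroup (Equiv.Perm X)} {H : Subgroup (Equiv.Perm Y)} {T : G →* H}

theorem IsGENEO.abs_sub_le {F : (X → ℝ) → (Y → ℝ)} (hF : IsGENEO Φ Ψ G H T F)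
    (hΨb : ∀ ψ ∈ Ψ, ∃ C : ℝ, ∀ y, |ψ y| ≤ C) {φ₁ φ₂ : X → ℝ} (hφ₁ : φ₁ ∈ Φ) (hφ₂ : φ₂ ∈ Φ)
    (y : Y) : |F φ₁ y - F φ₂ y| ≤ ⨆ x, |φ₁ x - φ₂ x| :=
  (le_ciSup (bddAbove_range_abs_sub (hΨb _ (hF.1 φ₁ hφ₁)) (hΨb _ (hF.1 φ₂ hφ₂))) y).trans
    (hF.2.2 φ₁ hφ₁ φ₂ hφ₂)

theorem isGENEO_sum_smul {ι : Type*} [Fintype ι] (hΨb : ∀ ψ ∈ Ψ, ∃ C : ℝ, ∀ y, |ψ y| ≤ C)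
    {Fs : ι → (X → ℝ) → (Y → ℝ)} (hFs : ∀ i, IsGENEO Φ Ψ G H T (Fs i))
    {a : ι → ℝ} (ha : ∑ i, |a i| ≤ 1)
    (hmaps : ∀ φ ∈ Φ, (fun y => ∑ i, a i * Fs i φ y) ∈ Ψ) :
    IsGENEO Φ Ψ G H T (fun f y => ∑ i, a i * Fs i f y) := by
  refine ⟨hmaps, fun φ hφ g => ?_, fun φ₁ hφ₁ φ₂ hφ₂ => ?_⟩
  · simp only [(hFs _).2.1 φ hφ g]
  · have hS : 0 ≤ ⨆ x, |φ₁ x - φ₂ x| := Real.iSup_nonneg fun _ => abs_nonneg _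
    refine Real.iSup_le (fun y => ?_) hS
    rw [← Finset.sum_sub_distrib]
    simp only [← mul_sub]
    exact abs_sum_mul_le_of_abs_le ha (fun i => (hFs i).abs_sub_le hΨb hφ₁ hφ₂ y) hS

theorem isGENEO_convexCombination (hΨ : Convex ℝ Ψ) (hΨb : ∀ ψ ∈ Ψ, ∃ C : ℝ, ∀ y, |ψ y| ≤ C)
    {F₁ F₂ : (X → ℝ) → (Y → ℝ)} (hF₁ : IsGENEO Φ Ψ G H T F₁) (hF₂ : IsGENEO Φ Ψ G H T F₂)
    {t : ℝ} (ht₀ : 0 ≤ t) (ht₁ : t ≤ 1) :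
    IsGENEO Φ Ψ G H T (fun f y => t * F₁ f y + (1 - t) * F₂ f y) := by
  have hsum : ∀ (f : X → ℝ) (y : Y),
      ∑ i, ![t, 1 - t] i * ![F₁, F₂] i f y = t * F₁ f y + (1 - t) * F₂ f y := by
    simp [Fin.sum_univ_two]
  have ha : ∑ i, |![t, 1 - t] i| ≤ 1 := by
    simp [Fin.sum_univ_two, abs_of_nonneg ht₀, abs_of_nonneg (sub_nonneg.2 ht₁)]
  have hmaps : ∀ φ ∈ Φ, (fun y => t * F₁ φ y + (1 - t) * F₂ φ y) ∈ Ψ := fun φ hφ =>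
    hΨ (hF₁.1 φ hφ) (hF₂.1 φ hφ) ht₀ (sub_nonneg.2 ht₁) (add_sub_cancel t 1)
  simpa only [hsum] using isGENEO_sum_smul hΨb (Fs := ![F₁, F₂])
    (fun i => by fin_cases i <;> assumption) ha (by simpa only [hsum] using hmaps)

end IsGENEO

theorem stmt16_general {X Y : Type*}
    (Φ : Set (X → ℝ)) (Ψ : Set (Y → ℝ))
    (hΨb : ∀ ψ ∈ Ψ, ∃ C : ℝ, ∀ y, |ψ y| ≤ C)
    (G : Subgroup (Equiv.Perm X)) (H : Subgroup (Equiv.Perm Y))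
    (T : G →* H)
    (n : ℕ) (Fs : Fin n → ((X → ℝ) → (Y → ℝ)))
    (hFs : ∀ i, IsGENEO Φ Ψ G H T (Fs i))
    (a : Fin n → ℝ) (ha : ∑ i, |a i| ≤ 1)
    (Fsum : (X → ℝ) → (Y → ℝ))
    (hFsum : ∀ f, Fsum f = fun y => ∑ i, a i * Fs i f y)
    (hmaps : ∀ φ ∈ Φ, Fsum φ ∈ Ψ) :
    IsGENEO Φ Ψ G H T Fsum ∧
    (Convex ℝ Ψ → ∀ F1 F2, IsGENEO Φ Ψ G H T F1 → IsGENEO Φ Ψ G H T F2 →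
      ∀ t : ℝ, 0 ≤ t → t ≤ 1 →
        IsGENEO Φ Ψ G H T (fun f => fun y => t * F1 f y + (1 - t) * F2 f y)) := by
  obtain rfl : Fsum = fun f y => ∑ i, a i * Fs i f y := funext hFsum
  exact ⟨isGENEO_sum_smul hΨb hFs ha hmaps,
    fun hΨ _ _ hF₁ hF₂ _ ht₀ ht₁ => isGENEO_convexCombination hΨ hΨb hF₁ hF₂ ht₀ ht₁⟩

/-- if `F1, …, Fn` are GENEOs, `Σ|a_i| ≤ 1`, and
`F_Σ(φ) = Σ a_i F_i(φ)` maps `Φ` into `Ψ`, then `F_Σ` is a GENEO; in particular, if `Ψ`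
is convex, the set of GENEOs is convex. -/
theorem stmt16 {X Y : Type*} [Nonempty X] [Nonempty Y]
    (Φ : Set (X → ℝ)) (Ψ : Set (Y → ℝ))
    (hΦb : ∀ φ ∈ Φ, ∃ C : ℝ, ∀ x, |φ x| ≤ C)
    (hΨb : ∀ ψ ∈ Ψ, ∃ C : ℝ, ∀ y, |ψ y| ≤ C)
    (G : Subgroup (Equiv.Perm X)) (H : Subgroup (Equiv.Perm Y))
    (hG : ∀ g ∈ G, ∀ φ ∈ Φ, (fun x => φ (g x)) ∈ Φ)
    (hH : ∀ h ∈ H, ∀ ψ ∈ Ψ, (fun y => ψ (h y)) ∈ Ψ)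
    (T : G →* H)
    (n : ℕ) (Fs : Fin n → ((X → ℝ) → (Y → ℝ)))
    (hFs : ∀ i, IsGENEO Φ Ψ G H T (Fs i))
    (a : Fin n → ℝ) (ha : ∑ i, |a i| ≤ 1)
    (Fsum : (X → ℝ) → (Y → ℝ))
    (hFsum : ∀ f, Fsum f = fun y => ∑ i, a i * Fs i f y)
    (hmaps : ∀ φ ∈ Φ, Fsum φ ∈ Ψ) :
    IsGENEO Φ Ψ G H T Fsum ∧
    (Convex ℝ Ψ → ∀ F1 F2, IsGENEO Φ Ψ G H T F1 → IsGENEO Φ Ψ G H T F2 →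
      ∀ t : ℝ, 0 ≤ t → t ≤ 1 →
        IsGENEO Φ Ψ G H T (fun f => fun y => t * F1 f y + (1 - t) * F2 f y)) :=
  stmt16_general Φ Ψ hΨb G H T n Fs hFs a ha Fsum hFsum hmaps
end

section
/- For any nonempty family F of GENEOs, the function D^{F}(φ1, φ2) := sup_{F∈F} d_match(D(F(φ1)), D(F(φ2))), where D(ψ) denotes the persistence diagram of ψ and d_match the bottleneck distance, is a strongly G-invariant pseudo-metric on Φ: D^{F}(φ1∘g, φ2) = D^{F}(φ1, φ2∘g) = D^{F}(φ1∘g, φ2∘g) = D^{F}(φ1, φ2) for all g ∈ G. -/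
/-- for a nonempty family `𝓕` of GENEOs, the function
`D^𝓕(φ1,φ2) := sup_{F∈𝓕} d_match(D(F φ1), D(F φ2))` is a strongly `G`-invariant
pseudo-metric on `Φ`.  Here `PD` is the space of persistence diagrams, `Dgm` the map
assigning to each function its persistence diagram, and `dmatch` the bottleneck distance,
assumed to satisfy the stability theorem and invariance under precomposition with
homeomorphisms. -/
theorem stmt17 {X Y PD : Type*} [Nonempty X] [Nonempty Y]
    (Φ : Set (X → ℝ)) (Ψ : Set (Y → ℝ))
    (hΦb : ∀ φ ∈ Φ, ∃ C : ℝ, ∀ x, |φ x| ≤ C)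
    (hΨb : ∀ ψ ∈ Ψ, ∃ C : ℝ, ∀ y, |ψ y| ≤ C)
    (G : Subgroup (Equiv.Perm X)) (H : Subgroup (Equiv.Perm Y))
    (hG : ∀ g ∈ G, ∀ φ ∈ Φ, (fun x => φ (g x)) ∈ Φ)
    (hH : ∀ h ∈ H, ∀ ψ ∈ Ψ, (fun y => ψ (h y)) ∈ Ψ)
    (T : G →* H)
    (dmatch : PD → PD → ℝ)
    (hd_nonneg : ∀ p q, 0 ≤ dmatch p q)
    (hd_symm : ∀ p q, dmatch p q = dmatch q p)
    (hd_refl : ∀ p, dmatch p p = 0)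
    (hd_tri : ∀ p q r, dmatch p r ≤ dmatch p q + dmatch q r)
    (Dgm : (Y → ℝ) → PD)
    -- stability of the bottleneck distance
    (hstab : ∀ ψ1 ψ2 : Y → ℝ, dmatch (Dgm ψ1) (Dgm ψ2) ≤ ⨆ y, |ψ1 y - ψ2 y|)
    -- invariance of persistence diagrams under precomposition with homeomorphisms
    (hinv : ∀ ψ : Y → ℝ, ∀ h : Equiv.Perm Y, Dgm (fun y => ψ (h y)) = Dgm ψ)
    (𝓕 : Set ((X → ℝ) → (Y → ℝ))) (h𝓕ne : 𝓕.Nonempty)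
    (h𝓕 : ∀ F ∈ 𝓕, IsGENEO Φ Ψ G H T F)
    (DF : (X → ℝ) → (X → ℝ) → ℝ)
    (hDF : ∀ f1 f2, DF f1 f2 = ⨆ F : 𝓕, dmatch (Dgm (F.1 f1)) (Dgm (F.1 f2))) :
    (∀ φ1 ∈ Φ, ∀ φ2 ∈ Φ, DF φ1 φ2 = DF φ2 φ1) ∧
    (∀ φ ∈ Φ, DF φ φ = 0) ∧
    (∀ φ1 ∈ Φ, ∀ φ2 ∈ Φ, ∀ φ3 ∈ Φ, DF φ1 φ2 ≤ DF φ1 φ3 + DF φ3 φ2) ∧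
    (∀ φ1 ∈ Φ, ∀ φ2 ∈ Φ, ∀ g ∈ G,
      DF (fun x => φ1 (g x)) φ2 = DF φ1 φ2 ∧
      DF φ1 (fun x => φ2 (g x)) = DF φ1 φ2 ∧
      DF (fun x => φ1 (g x)) (fun x => φ2 (g x)) = DF φ1 φ2) := by
  have key : ∀ φ1 ∈ Φ, ∀ φ2 ∈ Φ, ∀ F : 𝓕,
      dmatch (Dgm (F.1 φ1)) (Dgm (F.1 φ2)) ≤ ⨆ x, |φ1 x - φ2 x| := by
    intro φ1 h1 φ2 h2 F
    exact (hstab _ _).trans ((h𝓕 F.1 F.2).2.2 φ1 h1 φ2 h2)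
  have bdd : ∀ φ1 ∈ Φ, ∀ φ2 ∈ Φ,
      BddAbove (Set.range fun F : 𝓕 => dmatch (Dgm (F.1 φ1)) (Dgm (F.1 φ2))) := by
    intro φ1 h1 φ2 h2
    refine ⟨⨆ x, |φ1 x - φ2 x|, fun r hr => ?_⟩
    obtain ⟨F, rfl⟩ := hr
    exact key φ1 h1 φ2 h2 F
  haveI : Nonempty 𝓕 := h𝓕ne.to_subtype
  refine ⟨?_, ?_, ?_, ?_⟩
  · intro φ1 _ φ2 _
    rw [hDF, hDF]
    congr 1; funext F; exact hd_symm _ _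
  · intro φ _
    rw [hDF]; simp [hd_refl]
  · intro φ1 h1 φ2 h2 φ3 h3
    rw [hDF, hDF, hDF]
    refine ciSup_le fun F => ?_
    calc dmatch (Dgm (F.1 φ1)) (Dgm (F.1 φ2))
        ≤ dmatch (Dgm (F.1 φ1)) (Dgm (F.1 φ3)) + dmatch (Dgm (F.1 φ3)) (Dgm (F.1 φ2)) :=
          hd_tri _ _ _
      _ ≤ _ := add_le_add (le_ciSup (bdd φ1 h1 φ3 h3) F) (le_ciSup (bdd φ3 h3 φ2 h2) F)
  · intro φ1 h1 φ2 h2 g hg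
    have e1 : ∀ φ ∈ Φ, ∀ F : 𝓕, Dgm (F.1 (fun x => φ (g x))) = Dgm (F.1 φ) := by
      intro φ hφ F
      have h := (h𝓕 F.1 F.2).2.1 φ hφ ⟨g, hg⟩
      calc Dgm (F.1 (fun x => φ (g x))) = Dgm (fun y => F.1 φ ((T ⟨g, hg⟩).1 y)) := by rw [← h]
        _ = Dgm (F.1 φ) := hinv _ _
    refine ⟨?_, ?_, ?_⟩ <;> rw [hDF, hDF] <;> congr 1 <;> funext F
    · rw [e1 φ1 h1 F]
    · rw [e1 φ2 h2 F]
    · rw [e1 φ1 h1 F, e1 φ2 h2 F]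
end

section
/- For any nonempty family F of GENEOs, the pseudo-metric D^{F}(φ1, φ2) := sup_{F∈F} d_match(D(F(φ1)), D(F(φ2))) satisfies D^{F} ≤ d_G ≤ D_Φ, where d_G is the natural pseudo-distance and D_Φ the sup-norm distance. -/
/-!
A GENEO `F` commutes with the action of `G` up to `T`, and persistence diagrams ignore
reparametrisations, so `D(F φ₂) = D(F (φ₂ ∘ g))` for every `g ∈ G`. Stability of the matching
distance and non-expansivity of `F` then give
`d_match(D(F φ₁), D(F φ₂)) ≤ ‖φ₁ - φ₂ ∘ g‖_∞`; taking the infimum over `g` and the supremum over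
`F` yields `D^𝓕 ≤ d_G`, while `d_G ≤ D_Φ` is the choice `g = 1`.
-/

section

variable {X Y PD : Type*}

theorem iSup_abs_sub_nonneg (f₁ f₂ : X → ℝ) : 0 ≤ ⨆ x, |f₁ x - f₂ x| :=
  Real.iSup_nonneg fun _ => abs_nonneg _

theorem iInf_iSup_abs_sub_comp_le (G : Subgroup (Equiv.Perm X)) (φ₁ φ₂ : X → ℝ) :
    ⨅ g : G, ⨆ x, |φ₁ x - φ₂ (g.1 x)| ≤ ⨆ x, |φ₁ x - φ₂ x| := by
  have hbdd : BddBelow (Set.range fun g : G => ⨆ x, |φ₁ x - φ₂ (g.1 x)|) :=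
    ⟨0, by rintro _ ⟨g, rfl⟩; exact iSup_abs_sub_nonneg _ _⟩
  simpa using ciInf_le hbdd 1

namespace IsGENEO

variable {Φ : Set (X → ℝ)} {Ψ : Set (Y → ℝ)}
  {G : Subgroup (Equiv.Perm X)} {H : Subgroup (Equiv.Perm Y)} {T : G →* H}
  {F : (X → ℝ) → (Y → ℝ)} {Dgm : (Y → ℝ) → PD}

theorem dgm_apply_comp (hF : IsGENEO Φ Ψ G H T F)
    (hinv : ∀ ψ : Y → ℝ, ∀ h : Equiv.Perm Y, Dgm (fun y => ψ (h y)) = Dgm ψ)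
    {φ : X → ℝ} (hφ : φ ∈ Φ) (g : G) :
    Dgm (F fun x => φ (g.1 x)) = Dgm (F φ) := by
  rw [hF.2.1 φ hφ g]
  exact hinv (F φ) (T g).1

theorem dmatch_le_iInf_iSup_abs_sub_comp (hF : IsGENEO Φ Ψ G H T F)
    (hG : ∀ g ∈ G, ∀ φ ∈ Φ, (fun x => φ (g x)) ∈ Φ) {dmatch : PD → PD → ℝ}
    (hstab : ∀ ψ₁ ψ₂ : Y → ℝ, dmatch (Dgm ψ₁) (Dgm ψ₂) ≤ ⨆ y, |ψ₁ y - ψ₂ y|)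
    (hinv : ∀ ψ : Y → ℝ, ∀ h : Equiv.Perm Y, Dgm (fun y => ψ (h y)) = Dgm ψ)
    {φ₁ φ₂ : X → ℝ} (hφ₁ : φ₁ ∈ Φ) (hφ₂ : φ₂ ∈ Φ) :
    dmatch (Dgm (F φ₁)) (Dgm (F φ₂)) ≤ ⨅ g : G, ⨆ x, |φ₁ x - φ₂ (g.1 x)| := by
  refine le_ciInf fun g => ?_
  calc dmatch (Dgm (F φ₁)) (Dgm (F φ₂))
      = dmatch (Dgm (F φ₁)) (Dgm (F fun x => φ₂ (g.1 x))) := by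
        rw [hF.dgm_apply_comp hinv hφ₂ g]
    _ ≤ ⨆ y, |F φ₁ y - F (fun x => φ₂ (g.1 x)) y| := hstab _ _
    _ ≤ ⨆ x, |φ₁ x - φ₂ (g.1 x)| := hF.2.2 φ₁ hφ₁ _ (hG g.1 g.2 φ₂ hφ₂)

end IsGENEO

end

theorem stmt18_general {X Y PD : Type*}
    (Φ : Set (X → ℝ)) (Ψ : Set (Y → ℝ))
    (G : Subgroup (Equiv.Perm X)) (H : Subgroup (Equiv.Perm Y))
    (hG : ∀ g ∈ G, ∀ φ ∈ Φ, (fun x => φ (g x)) ∈ Φ)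
    (T : G →* H)
    (dmatch : PD → PD → ℝ)
    (Dgm : (Y → ℝ) → PD)
    (hstab : ∀ ψ1 ψ2 : Y → ℝ, dmatch (Dgm ψ1) (Dgm ψ2) ≤ ⨆ y, |ψ1 y - ψ2 y|)
    (hinv : ∀ ψ : Y → ℝ, ∀ h : Equiv.Perm Y, Dgm (fun y => ψ (h y)) = Dgm ψ)
    (𝓕 : Set ((X → ℝ) → (Y → ℝ)))
    (h𝓕 : ∀ F ∈ 𝓕, IsGENEO Φ Ψ G H T F)
    (DF : (X → ℝ) → (X → ℝ) → ℝ)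
    (hDF : ∀ f1 f2, DF f1 f2 = ⨆ F : 𝓕, dmatch (Dgm (F.1 f1)) (Dgm (F.1 f2)))
    (DΦ : (X → ℝ) → (X → ℝ) → ℝ)
    (hDΦ : ∀ f1 f2, DΦ f1 f2 = ⨆ x, |f1 x - f2 x|)
    (dG : (X → ℝ) → (X → ℝ) → ℝ)
    (hdG : ∀ f1 f2, dG f1 f2 = ⨅ g : G, DΦ f1 (fun x => f2 (g.1 x))) :
    ∀ φ1 ∈ Φ, ∀ φ2 ∈ Φ, DF φ1 φ2 ≤ dG φ1 φ2 ∧ dG φ1 φ2 ≤ DΦ φ1 φ2 := by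
  intro φ1 hφ1 φ2 hφ2
  simp only [hDF, hdG, hDΦ]
  have hdG_nonneg : 0 ≤ ⨅ g : G, ⨆ x, |φ1 x - φ2 (g.1 x)| :=
    Real.iInf_nonneg fun _ => iSup_abs_sub_nonneg _ _
  exact ⟨Real.iSup_le (fun F =>
      (h𝓕 F.1 F.2).dmatch_le_iInf_iSup_abs_sub_comp hG hstab hinv hφ1 hφ2) hdG_nonneg,
    iInf_iSup_abs_sub_comp_le G φ1 φ2⟩

/-- for any nonempty family `𝓕` of GENEOs,
`D^𝓕(φ1,φ2) := sup_{F∈𝓕} d_match(D(F φ1), D(F φ2))` satisfies `D^𝓕 ≤ d_G ≤ D_Φ`, where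
`d_G` is the natural pseudo-distance and `D_Φ` the sup-norm distance. -/
theorem stmt18 {X Y PD : Type*} [Nonempty X] [Nonempty Y]
    (Φ : Set (X → ℝ)) (Ψ : Set (Y → ℝ))
    (hΦb : ∀ φ ∈ Φ, ∃ C : ℝ, ∀ x, |φ x| ≤ C)
    (hΨb : ∀ ψ ∈ Ψ, ∃ C : ℝ, ∀ y, |ψ y| ≤ C)
    (G : Subgroup (Equiv.Perm X)) (H : Subgroup (Equiv.Perm Y))
    (hG : ∀ g ∈ G, ∀ φ ∈ Φ, (fun x => φ (g x)) ∈ Φ)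
    (hH : ∀ h ∈ H, ∀ ψ ∈ Ψ, (fun y => ψ (h y)) ∈ Ψ)
    (T : G →* H)
    (dmatch : PD → PD → ℝ)
    (hd_nonneg : ∀ p q, 0 ≤ dmatch p q)
    (hd_symm : ∀ p q, dmatch p q = dmatch q p)
    (hd_tri : ∀ p q r, dmatch p r ≤ dmatch p q + dmatch q r)
    (Dgm : (Y → ℝ) → PD)
    (hstab : ∀ ψ1 ψ2 : Y → ℝ, dmatch (Dgm ψ1) (Dgm ψ2) ≤ ⨆ y, |ψ1 y - ψ2 y|)
    (hinv : ∀ ψ : Y → ℝ, ∀ h : Equiv.Perm Y, Dgm (fun y => ψ (h y)) = Dgm ψ)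
    (𝓕 : Set ((X → ℝ) → (Y → ℝ))) (h𝓕ne : 𝓕.Nonempty)
    (h𝓕 : ∀ F ∈ 𝓕, IsGENEO Φ Ψ G H T F)
    (DF : (X → ℝ) → (X → ℝ) → ℝ)
    (hDF : ∀ f1 f2, DF f1 f2 = ⨆ F : 𝓕, dmatch (Dgm (F.1 f1)) (Dgm (F.1 f2)))
    (DΦ : (X → ℝ) → (X → ℝ) → ℝ)
    (hDΦ : ∀ f1 f2, DΦ f1 f2 = ⨆ x, |f1 x - f2 x|)
    (dG : (X → ℝ) → (X → ℝ) → ℝ)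
    (hdG : ∀ f1 f2, dG f1 f2 = ⨅ g : G, DΦ f1 (fun x => f2 (g.1 x))) :
    ∀ φ1 ∈ Φ, ∀ φ2 ∈ Φ, DF φ1 φ2 ≤ dG φ1 φ2 ∧ dG φ1 φ2 ≤ DΦ φ1 φ2 :=
  stmt18_general Φ Ψ G H hG T dmatch Dgm hstab hinv 𝓕 h𝓕 DF hDF DΦ hDΦ dG hdG
end
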